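/- arXiv:1610.00507 — 7 statements merged into one kernel-verified Lean document; each statement's English description precedes it below -/
import Mathlib

section
/- Let W ∈ C¹(ℝ) with W'(x) → −∞ as x → −∞ and W'(x) → +∞ as x → +∞, and let δ : ℝ × ℝ → [0,∞) be continuous with lim_{v→u} δ(u,v)/|v−u| = 0 for every u. Then the function u ↦ W'_{ir,δ}(u) := inf_{z>u} (W(z) − W(u) + δ(u,z))/(z−u) is continuous on ℝ. -/
/-!
Write `F(u) = inf_{z>u} Q(u,z)` with `Q(u,z) = (W z - W u + δ(u,z)) / (z - u)`. Each `Q(·,z)` is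
continuous on `u < z`, so `F` is upper semicontinuous. For lower semicontinuity at `u₀` one bounds
`Q(u,z)` below uniformly for `u` near `u₀`: as `δ ≥ 0`, `Q(u,z)` dominates the difference quotient
of `W`, which by the mean value theorem is a value of `W'` on `(u,z)`. For `(u,z)` near the diagonal
this is close to `W'(u₀) ≥ F(u₀)` (the inequality `F ≤ W'` is where `δ(u,v) = o(|v-u|)` enters);
for large `z` coercivity of `W'` pushes the difference quotient above `F(u₀)`; on the remaining
compact range of `z`, `Q` is jointly continuous and the tube lemma applies.
-/

open Filter Set Topology

noncomputable def correctedSlope (W : ℝ → ℝ) (δ : ℝ × ℝ → ℝ) (u z : ℝ) : ℝ :=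
  (W z - W u + δ (u, z)) / (z - u)

def correctedSlopes (W : ℝ → ℝ) (δ : ℝ × ℝ → ℝ) (u : ℝ) : Set ℝ :=
  {q | ∃ z, u < z ∧ q = correctedSlope W δ u z}

/-- The corrected inf-right global slope `W'_{ir,δ}` of the paper. -/
noncomputable def infRightSlope (W : ℝ → ℝ) (δ : ℝ × ℝ → ℝ) (u : ℝ) : ℝ :=
  sInf (correctedSlopes W δ u)

theorem exists_forall_Ici_le_of_tendsto_atTop {f : ℝ → ℝ} (hf : Continuous f)
    (hf_top : Tendsto f atTop atTop) (a : ℝ) : ∃ m, ∀ x ∈ Ici a, m ≤ f x := by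
  obtain ⟨R, hR⟩ := eventually_atTop.1 (hf_top.eventually_ge_atTop 0)
  obtain ⟨x₀, -, hx₀⟩ :=
    isCompact_Icc.exists_isMinOn (nonempty_Icc.2 (le_max_left a R)) hf.continuousOn
  refine ⟨min (f x₀) 0, fun x hx => ?_⟩
  rcases le_or_gt x (max a R) with h | h
  · exact (min_le_left _ _).trans (hx₀ ⟨hx, h⟩)
  · exact (min_le_right _ _).trans (hR x ((le_max_right a R).trans h.le))

section

variable {W W' : ℝ → ℝ} {δ : ℝ × ℝ → ℝ}

theorem slope_le_correctedSlope (hδ0 : ∀ p, 0 ≤ δ p) {u z : ℝ} (huz : u < z) :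
    (W z - W u) / (z - u) ≤ correctedSlope W δ u z :=
  div_le_div_of_nonneg_right (le_add_of_nonneg_right (hδ0 _)) (sub_pos.2 huz).le

theorem exists_deriv_le_correctedSlope (hW : ∀ u, HasDerivAt W (W' u) u)
    (hδ0 : ∀ p, 0 ≤ δ p) {u z : ℝ} (huz : u < z) :
    ∃ c ∈ Ioo u z, W' c ≤ correctedSlope W δ u z := by
  obtain ⟨c, hc, hc_eq⟩ := exists_hasDerivAt_eq_slope W W' huz
    (fun x _ => (hW x).continuousAt.continuousWithinAt) (fun x _ => hW x)
  exact ⟨c, hc, hc_eq ▸ slope_le_correctedSlope hδ0 huz⟩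

theorem continuousAt_correctedSlope (hWc : Continuous W) (hδc : Continuous δ) {p : ℝ × ℝ}
    (hp : p.1 < p.2) : ContinuousAt (fun p : ℝ × ℝ => correctedSlope W δ p.1 p.2) p :=
  (((hWc.comp continuous_snd).sub (hWc.comp continuous_fst)).add hδc).continuousAt.div
    (continuous_snd.sub continuous_fst).continuousAt (sub_pos.2 hp).ne'

theorem tendsto_correctedSlope_nhdsGT {u : ℝ} (hW : HasDerivAt W (W' u) u)
    (hδlim : Tendsto (fun v => δ (u, v) / |v - u|) (𝓝[≠] u) (𝓝 0)) :
    Tendsto (correctedSlope W δ u) (𝓝[>] u) (𝓝 (W' u)) := by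
  have hslope : Tendsto (fun z => (W z - W u) / (z - u)) (𝓝[>] u) (𝓝 (W' u)) :=
    ((hasDerivAt_iff_tendsto_slope.1 hW).mono_left (nhdsGT_le_nhdsNE u)).congr
      fun z => slope_def_field W u z
  have hδ : Tendsto (fun z => δ (u, z) / (z - u)) (𝓝[>] u) (𝓝 0) :=
    (hδlim.mono_left (nhdsGT_le_nhdsNE u)).congr' <| by
      filter_upwards [self_mem_nhdsWithin] with z hz
      rw [abs_of_pos (sub_pos.2 hz)]
  show Tendsto (fun z => (W z - W u + δ (u, z)) / (z - u)) _ _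
  simpa only [add_div, add_zero] using hslope.add hδ

theorem bddBelow_correctedSlopes (hW : ∀ u, HasDerivAt W (W' u) u) (hW'c : Continuous W')
    (hWtop : Tendsto W' atTop atTop) (hδ0 : ∀ p, 0 ≤ δ p) (u : ℝ) :
    BddBelow (correctedSlopes W δ u) := by
  obtain ⟨m, hm⟩ := exists_forall_Ici_le_of_tendsto_atTop hW'c hWtop u
  refine ⟨m, ?_⟩
  rintro _ ⟨z, huz, rfl⟩
  obtain ⟨c, hc, hc_le⟩ := exists_deriv_le_correctedSlope hW hδ0 huz
  exact (hm c hc.1.le).trans hc_le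

theorem infRightSlope_le_correctedSlope (hW : ∀ u, HasDerivAt W (W' u) u)
    (hW'c : Continuous W') (hWtop : Tendsto W' atTop atTop) (hδ0 : ∀ p, 0 ≤ δ p) {u z : ℝ}
    (huz : u < z) : infRightSlope W δ u ≤ correctedSlope W δ u z :=
  csInf_le (bddBelow_correctedSlopes hW hW'c hWtop hδ0 u) ⟨z, huz, rfl⟩

theorem infRightSlope_le_deriv (hW : ∀ u, HasDerivAt W (W' u) u) (hW'c : Continuous W')
    (hWtop : Tendsto W' atTop atTop) (hδ0 : ∀ p, 0 ≤ δ p)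
    (hδlim : ∀ u, Tendsto (fun v => δ (u, v) / |v - u|) (𝓝[≠] u) (𝓝 0)) (u : ℝ) :
    infRightSlope W δ u ≤ W' u :=
  ge_of_tendsto (tendsto_correctedSlope_nhdsGT (hW u) (hδlim u)) <| by
    filter_upwards [self_mem_nhdsWithin] with z huz
    exact infRightSlope_le_correctedSlope hW hW'c hWtop hδ0 huz

theorem tendsto_sub_mul_atTop (hW : ∀ u, HasDerivAt W (W' u) u)
    (hWtop : Tendsto W' atTop atTop) (L : ℝ) : Tendsto (fun z => W z - L * z) atTop atTop := by
  obtain ⟨R, hR⟩ := eventually_atTop.1 (hWtop.eventually_ge_atTop (L + 1))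
  refine tendsto_atTop_mono' atTop ?_ (tendsto_atTop_add_const_right _ (W R - L * R - R) tendsto_id)
  filter_upwards [eventually_gt_atTop R] with z hRz
  obtain ⟨c, hc, hc_eq⟩ := exists_hasDerivAt_eq_slope W W' hRz
    (fun x _ => (hW x).continuousAt.continuousWithinAt) (fun x _ => hW x)
  have := hR c hc.1.le
  rw [hc_eq, le_div_iff₀ (sub_pos.2 hRz)] at this
  dsimp only [id]
  linarith

theorem eventually_le_slope_of_mem_Icc (hW : ∀ u, HasDerivAt W (W' u) u)
    (hWtop : Tendsto W' atTop atTop) (a b L : ℝ) :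
    ∀ᶠ z in atTop, ∀ u ∈ Icc a b, L ≤ (W z - W u) / (z - u) := by
  have hWc : Continuous W := continuous_iff_continuousAt.2 fun x => (hW x).continuousAt
  obtain ⟨C, hC⟩ := (isCompact_Icc (a := a) (b := b)).bddAbove_image
    (f := fun u => W u - L * u) (by fun_prop)
  filter_upwards [(tendsto_sub_mul_atTop hW hWtop L).eventually_ge_atTop C,
    eventually_gt_atTop b] with z hzC hbz u hu
  have := hC (mem_image_of_mem _ hu)
  rw [le_div_iff₀ (by linarith [hu.2])]
  linarith

theorem eventually_lt_correctedSlope_of_lt_deriv (hW : ∀ u, HasDerivAt W (W' u) u)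
    (hδ0 : ∀ p, 0 ≤ δ p) {u₀ y : ℝ} (hW'c : ContinuousAt W' u₀) (hy : y < W' u₀) :
    ∀ᶠ p : ℝ × ℝ in 𝓝 (u₀, u₀), p.1 < p.2 → y < correctedSlope W δ p.1 p.2 := by
  obtain ⟨a, b, hab, hsub⟩ := mem_nhds_iff_exists_Ioo_subset.1 (hW'c.eventually (lt_mem_nhds hy))
  filter_upwards [prod_mem_nhds (isOpen_Ioo.mem_nhds hab) (isOpen_Ioo.mem_nhds hab)]
    with p ⟨hp₁, hp₂⟩ hp
  obtain ⟨c, hc, hc_le⟩ := exists_deriv_le_correctedSlope hW hδ0 hp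
  exact lt_of_lt_of_le (hsub ⟨hp₁.1.trans hc.1, hc.2.trans hp₂.2⟩) hc_le

theorem eventually_forall_lt_correctedSlope (hW : ∀ u, HasDerivAt W (W' u) u)
    (hW'c : Continuous W') (hWtop : Tendsto W' atTop atTop) (hδc : Continuous δ)
    (hδ0 : ∀ p, 0 ≤ δ p) (hδlim : ∀ u, Tendsto (fun v => δ (u, v) / |v - u|) (𝓝[≠] u) (𝓝 0))
    {u₀ y : ℝ} (hy : y < infRightSlope W δ u₀) :
    ∀ᶠ u in 𝓝 u₀, ∀ z, u < z → y < correctedSlope W δ u z := by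
  have hWc : Continuous W := continuous_iff_continuousAt.2 fun x => (hW x).continuousAt
  obtain ⟨Z, hZ⟩ := eventually_atTop.1
    (eventually_le_slope_of_mem_Icc hW hWtop (u₀ - 1) (u₀ + 1) (infRightSlope W δ u₀))
  have hbounded : ∀ᶠ u in 𝓝 u₀, ∀ z ∈ Icc (u₀ - 1) Z, u < z → y < correctedSlope W δ u z := by
    refine isCompact_Icc.eventually_forall_of_forall_eventually fun z _ => ?_
    rcases lt_trichotomy z u₀ with hz | rfl | hz
    · filter_upwards [(isOpen_lt continuous_snd continuous_fst).mem_nhds hz] with p hp hp'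
      exact (hp.not_gt hp').elim
    · exact eventually_lt_correctedSlope_of_lt_deriv hW hδ0 hW'c.continuousAt
        (hy.trans_le (infRightSlope_le_deriv hW hW'c hWtop hδ0 hδlim z))
    · filter_upwards [(continuousAt_correctedSlope hWc hδc hz).eventually (lt_mem_nhds
        (hy.trans_le (infRightSlope_le_correctedSlope hW hW'c hWtop hδ0 hz)))] with p hp _
      exact hp
  filter_upwards [hbounded, Ioo_mem_nhds (sub_one_lt u₀) (lt_add_one u₀)] with u hu hu₀ z huz
  rcases le_or_gt z Z with hzZ | hZz
  · exact hu z ⟨by linarith [hu₀.1], hzZ⟩ huz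
  · exact hy.trans_le <| (hZ z hZz.le u (Ioo_subset_Icc_self hu₀)).trans
      (slope_le_correctedSlope hδ0 huz)

theorem lowerSemicontinuous_infRightSlope (hW : ∀ u, HasDerivAt W (W' u) u)
    (hW'c : Continuous W') (hWtop : Tendsto W' atTop atTop) (hδc : Continuous δ)
    (hδ0 : ∀ p, 0 ≤ δ p) (hδlim : ∀ u, Tendsto (fun v => δ (u, v) / |v - u|) (𝓝[≠] u) (𝓝 0)) :
    LowerSemicontinuous (infRightSlope W δ) := by
  intro u₀ y hy
  obtain ⟨y', hyy', hy'⟩ := exists_between hy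
  filter_upwards [eventually_forall_lt_correctedSlope hW hW'c hWtop hδc hδ0 hδlim hy']
    with u hu
  refine hyy'.trans_le (le_csInf ⟨_, u + 1, lt_add_one u, rfl⟩ ?_)
  rintro _ ⟨z, huz, rfl⟩
  exact (hu z huz).le

theorem upperSemicontinuous_infRightSlope (hW : ∀ u, HasDerivAt W (W' u) u)
    (hW'c : Continuous W') (hWtop : Tendsto W' atTop atTop) (hδc : Continuous δ)
    (hδ0 : ∀ p, 0 ≤ δ p) : UpperSemicontinuous (infRightSlope W δ) := by
  intro u₀ y hy
  obtain ⟨_, ⟨z, huz, rfl⟩, hzy⟩ :=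
    exists_lt_of_csInf_lt (s := correctedSlopes W δ u₀) ⟨_, u₀ + 1, lt_add_one u₀, rfl⟩ hy
  have hWc : Continuous W := continuous_iff_continuousAt.2 fun x => (hW x).continuousAt
  have hcont : ContinuousAt (fun u => correctedSlope W δ u z) u₀ :=
    (continuousAt_correctedSlope hWc hδc (p := (u₀, z)) huz).comp (f := fun u => (u, z))
      (continuousAt_id.prodMk continuousAt_const)
  filter_upwards [hcont.eventually (gt_mem_nhds hzy), eventually_lt_nhds huz] with u hu huz'
  exact (infRightSlope_le_correctedSlope hW hW'c hWtop hδ0 huz').trans_lt hu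

end

theorem stmt4_general (W W' : ℝ → ℝ) (hW : ∀ u, HasDerivAt W (W' u) u) (hW'c : Continuous W')
    (hWtop : Tendsto W' atTop atTop)
    (δ : ℝ × ℝ → ℝ) (hδc : Continuous δ) (hδ0 : ∀ p, 0 ≤ δ p)
    (hδlim : ∀ u, Tendsto (fun v => δ (u, v) / |v - u|) (nhdsWithin u {u}ᶜ) (nhds 0)) :
    Continuous (fun u : ℝ =>
      sInf {q : ℝ | ∃ z, u < z ∧ q = (W z - W u + δ (u, z)) / (z - u)}) :=
  continuous_iff_lower_upperSemicontinuous.2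
    ⟨lowerSemicontinuous_infRightSlope hW hW'c hWtop hδc hδ0 hδlim,
      upperSemicontinuous_infRightSlope hW hW'c hWtop hδc hδ0⟩

/-- under coercivity of W', the corrected inf-right global slope
u ↦ W'_{ir,δ}(u) = inf_{z>u} (W(z) − W(u) + δ(u,z))/(z−u) is continuous on ℝ. -/
theorem stmt4 (W W' : ℝ → ℝ) (hW : ∀ u, HasDerivAt W (W' u) u) (hW'c : Continuous W')
    (hWbot : Tendsto W' atBot atBot) (hWtop : Tendsto W' atTop atTop)
    (δ : ℝ × ℝ → ℝ) (hδc : Continuous δ) (hδ0 : ∀ p, 0 ≤ δ p)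
    (hδlim : ∀ u, Tendsto (fun v => δ (u, v) / |v - u|) (nhdsWithin u {u}ᶜ) (nhds 0)) :
    Continuous (fun u : ℝ =>
      sInf {q : ℝ | ∃ z, u < z ∧ q = (W z - W u + δ (u, z)) / (z - u)}) :=
  stmt4_general W W' hW hW'c hWtop δ hδc hδ0 hδlim
end

section
/- Let W ∈ C¹(ℝ) with W'(x) → ±∞ as x → ±∞, and δ : ℝ × ℝ → [0,∞) continuous satisfying lim_{v→u} δ(u,v)/|v−u| = 0 and the strict reverse triangle inequality δ(u₀,u₁) > δ(u₀,v) + δ(v,u₁) for all u₀ < v < u₁. Let I ⊆ ℝ be an open interval such that W'_{ir,δ}(v) < W'(v) for every v ∈ I. Then W'_{ir,δ} is strictly decreasing on I. -/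
/-!
If `W'_{ir,δ}(x) < c < W'(x)`, then `W' ≥ c` on a neighbourhood of `x`, so every slope from `x`
to a point of that neighbourhood is at least `c`, and by coercivity so is every slope to a point
far out. Hence almost minimising points `z` for `x` lie in a fixed bounded region beyond the
neighbourhood; for `y` slightly right of `x`, splitting `δ(x, z)` at `y` by the reverse triangle
inequality and using `W(y) - W(x) ≥ c (y - x)` gives `W'_{ir,δ}(y) < W'_{ir,δ}(x)`. The same
splitting at `s` shows `W'_{ir,δ}(s) ≤ W'_{ir,δ}(t)` for `t` slightly left of `s`. A supremum
argument turns these one-sided local statements into strict decrease on the whole interval.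
-/

open Filter Set Topology

section LocalToGlobal

variable {α β : Type*} [ConditionallyCompleteLinearOrder α] [TopologicalSpace α] [OrderTopology α]
  [DenselyOrdered α] [Preorder β] {f : α → β}

theorem le_of_eventually_nhdsGT_of_eventually_nhdsLT {p q : α} (hpq : p ≤ q)
    (hright : ∀ x ∈ Ico p q, ∀ᶠ y in 𝓝[>] x, f y ≤ f x)
    (hleft : ∀ x ∈ Ioc p q, ∀ᶠ y in 𝓝[<] x, f x ≤ f y) : f q ≤ f p := by
  set T := {x ∈ Icc p q | ∀ t ∈ Icc p x, f t ≤ f p}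
  have hpT : p ∈ T := ⟨⟨le_rfl, hpq⟩, fun t ht => by rw [le_antisymm ht.2 ht.1]⟩
  have hTbdd : BddAbove T := ⟨q, fun x hx => hx.1.2⟩
  set s := sSup T
  have hps : p ≤ s := le_csSup hTbdd hpT
  have hsq : s ≤ q := csSup_le ⟨p, hpT⟩ fun x hx => hx.1.2
  have hbelow : ∀ t ∈ Ico p s, f t ≤ f p := fun t ht => by
    obtain ⟨x, hxT, htx⟩ := exists_lt_of_lt_csSup ⟨p, hpT⟩ ht.2
    exact hxT.2 t ⟨ht.1, htx.le⟩
  have hs : f s ≤ f p := by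
    rcases hps.eq_or_lt with hps | hps
    · rw [← hps]
    have := nhdsLT_neBot_of_exists_lt ⟨p, hps⟩
    obtain ⟨y, hsy, hy⟩ := ((hleft s ⟨hps, hsq⟩).and (Ioo_mem_nhdsLT hps)).exists
    exact hsy.trans (hbelow y ⟨hy.1.le, hy.2⟩)
  have hsT : ∀ t ∈ Icc p s, f t ≤ f p := fun t ht => by
    rcases ht.2.lt_or_eq with hts | hts
    exacts [hbelow t ⟨ht.1, hts⟩, hts ▸ hs]
  suffices s = q from this ▸ hs
  refine hsq.eq_or_lt.resolve_right fun hsq' => ?_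
  obtain ⟨u, hsu, hu⟩ :=
    (mem_nhdsGT_iff_exists_Ioo_subset' hsq').1 (hright s ⟨hps, hsq'⟩)
  obtain ⟨m, hsm, hmu⟩ := exists_between (lt_min hsu hsq')
  have hmT : m ∈ T := by
    refine ⟨⟨hps.trans hsm.le, hmu.le.trans (min_le_right _ _)⟩, fun t ht => ?_⟩
    rcases le_or_gt t s with hts | hst
    · exact hsT t ⟨ht.1, hts⟩
    · exact (hu ⟨hst, ht.2.trans_lt (hmu.trans_le (min_le_left _ _))⟩).trans hs
  exact (le_csSup hTbdd hmT).not_gt hsm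

theorem Set.OrdConnected.strictAntiOn_of_eventually {s : Set α} (hs : s.OrdConnected)
    (hright : ∀ x ∈ s, ∀ᶠ y in 𝓝[>] x, f y < f x)
    (hleft : ∀ x ∈ s, ∀ᶠ y in 𝓝[<] x, f x ≤ f y) : StrictAntiOn f s := by
  intro u hu v hv huv
  have := nhdsGT_neBot_of_exists_gt ⟨v, huv⟩
  obtain ⟨w, hwu, huw, hwv⟩ := ((hright u hu).and (Ioo_mem_nhdsGT huv)).exists
  have hsub : Icc w v ⊆ s := hs.out (hs.out hu hv ⟨huw.le, hwv.le⟩) hv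
  have hvw : f v ≤ f w := le_of_eventually_nhdsGT_of_eventually_nhdsLT hwv.le
    (fun x hx => (hright x (hsub (Ico_subset_Icc_self hx))).mono fun _ => le_of_lt)
    (fun x hx => hleft x (hsub (Ioc_subset_Icc_self hx)))
  exact hvw.trans_lt hwu

end LocalToGlobal

theorem mul_sub_le_sub_of_forall_le_deriv {W W' : ℝ → ℝ} (hW : ∀ t, HasDerivAt W (W' t) t)
    {c x y : ℝ} (hxy : x ≤ y) (hc : ∀ t ∈ Icc x y, c ≤ W' t) : c * (y - x) ≤ W y - W x := by
  have hdiff : Differentiable ℝ W := fun t => (hW t).differentiableAt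
  refine (convex_Icc x y).mul_sub_le_image_sub_of_le_deriv hdiff.continuous.continuousOn
    hdiff.differentiableOn (fun t ht => ?_) x ⟨le_rfl, hxy⟩ y ⟨hxy, le_rfl⟩ hxy
  rw [(hW t).deriv]
  exact hc t (interior_subset ht)

theorem Continuous.bddBelow_image_Ici_of_tendsto_atTop {g : ℝ → ℝ} (hg : Continuous g)
    (hgtop : Tendsto g atTop atTop) (x : ℝ) : BddBelow (g '' Ici x) := by
  obtain ⟨R, hR⟩ := eventually_atTop.1 (hgtop.eventually_ge_atTop 0)
  have hsplit : Ici x ⊆ Icc x R ∪ Ici R := fun t ht => (le_total t R).imp (⟨ht, ·⟩) id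
  refine ((isCompact_Icc.bddBelow_image hg.continuousOn).union ⟨0, ?_⟩).mono
    ((image_mono hsplit).trans (image_union _ _ _).le)
  rintro _ ⟨t, ht, rfl⟩
  exact hR t ht

noncomputable def irrevSlope (W : ℝ → ℝ) (δ : ℝ × ℝ → ℝ) (u z : ℝ) : ℝ :=
  (W z - W u + δ (u, z)) / (z - u)

/-- The paper's `W'_{ir,δ}(u)`. -/
noncomputable def irrevDeriv (W : ℝ → ℝ) (δ : ℝ × ℝ → ℝ) (u : ℝ) : ℝ :=
  sInf {q | ∃ z, u < z ∧ q = irrevSlope W δ u z}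

section IrreversibleDerivative

variable {W W' : ℝ → ℝ} {δ : ℝ × ℝ → ℝ}

theorem le_irrevSlope_iff {c u z : ℝ} (huz : u < z) :
    c ≤ irrevSlope W δ u z ↔ c * (z - u) ≤ W z - W u + δ (u, z) :=
  le_div_iff₀ (sub_pos.2 huz)

theorem irrevSlope_lt_iff {c u z : ℝ} (huz : u < z) :
    irrevSlope W δ u z < c ↔ W z - W u + δ (u, z) < c * (z - u) :=
  div_lt_iff₀ (sub_pos.2 huz)

theorem le_irrevSlope_of_forall_le_deriv (hW : ∀ t, HasDerivAt W (W' t) t) (hδ0 : ∀ p, 0 ≤ δ p)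
    {c u z : ℝ} (huz : u < z) (hc : ∀ t ∈ Icc u z, c ≤ W' t) : c ≤ irrevSlope W δ u z := by
  rw [le_irrevSlope_iff huz]
  linarith [mul_sub_le_sub_of_forall_le_deriv hW huz.le hc, hδ0 (u, z)]

theorem eventually_le_irrevSlope (hW : ∀ t, HasDerivAt W (W' t) t) (hW'c : Continuous W')
    (hWtop : Tendsto W' atTop atTop) (hδ0 : ∀ p, 0 ≤ δ p) (c u : ℝ) :
    ∀ᶠ z in atTop, c ≤ irrevSlope W δ u z := by
  obtain ⟨m, hm⟩ := hW'c.bddBelow_image_Ici_of_tendsto_atTop hWtop u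
  obtain ⟨R, hR⟩ := eventually_atTop.1 (hWtop.eventually_ge_atTop (c + 1))
  set R' := max R u
  -- Beyond `R'` the slope gains `1` over `c`, which beats the loss `c - min m c` on `[u, R']`.
  filter_upwards [eventually_ge_atTop (R' + (c - min m c) * (R' - u) + 1)] with z hz
  have hR'u : u ≤ R' := le_max_right _ _
  have hmc : 0 ≤ c - min m c := sub_nonneg.2 (min_le_right _ _)
  have hR'z : R' ≤ z := by nlinarith
  have hfar := mul_sub_le_sub_of_forall_le_deriv hW hR'z fun t ht =>
    hR t ((le_max_left _ _).trans ht.1)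
  have hnear := mul_sub_le_sub_of_forall_le_deriv (c := min m c) hW hR'u fun t ht =>
    (min_le_left _ _).trans (hm ⟨t, ht.1, rfl⟩)
  rw [le_irrevSlope_iff (by nlinarith)]
  nlinarith [hδ0 (u, z)]

theorem bddBelow_irrevSlope (hW : ∀ t, HasDerivAt W (W' t) t) (hW'c : Continuous W')
    (hWtop : Tendsto W' atTop atTop) (hδ0 : ∀ p, 0 ≤ δ p) (u : ℝ) :
    BddBelow {q | ∃ z, u < z ∧ q = irrevSlope W δ u z} := by
  obtain ⟨m, hm⟩ := hW'c.bddBelow_image_Ici_of_tendsto_atTop hWtop u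
  refine ⟨m, ?_⟩
  rintro _ ⟨z, huz, rfl⟩
  exact le_irrevSlope_of_forall_le_deriv hW hδ0 huz fun t ht => hm ⟨t, ht.1, rfl⟩

theorem irrevDeriv_le_irrevSlope (hW : ∀ t, HasDerivAt W (W' t) t) (hW'c : Continuous W')
    (hWtop : Tendsto W' atTop atTop) (hδ0 : ∀ p, 0 ≤ δ p) {u z : ℝ} (huz : u < z) :
    irrevDeriv W δ u ≤ irrevSlope W δ u z :=
  csInf_le (bddBelow_irrevSlope hW hW'c hWtop hδ0 u) ⟨z, huz, rfl⟩

theorem nonempty_irrevSlope (u : ℝ) : {q | ∃ z, u < z ∧ q = irrevSlope W δ u z}.Nonempty :=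
  ⟨_, u + 1, lt_add_one u, rfl⟩

theorem le_irrevDeriv {c u : ℝ} (h : ∀ z, u < z → c ≤ irrevSlope W δ u z) :
    c ≤ irrevDeriv W δ u := by
  refine le_csInf (nonempty_irrevSlope u) ?_
  rintro _ ⟨z, huz, rfl⟩
  exact h z huz

theorem exists_irrevSlope_lt {c u : ℝ} (h : irrevDeriv W δ u < c) :
    ∃ z, u < z ∧ irrevSlope W δ u z < c := by
  obtain ⟨_, ⟨z, huz, rfl⟩, hz⟩ := exists_lt_of_csInf_lt (nonempty_irrevSlope u) h
  exact ⟨z, huz, hz⟩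

theorem irrevDeriv_le_irrevDeriv_of_le_deriv (hW : ∀ t, HasDerivAt W (W' t) t)
    (hW'c : Continuous W') (hWtop : Tendsto W' atTop atTop) (hδ0 : ∀ p, 0 ≤ δ p)
    (hδtri : ∀ u₀ v u₁, u₀ < v → v < u₁ → δ (u₀, v) + δ (v, u₁) ≤ δ (u₀, u₁))
    {t s : ℝ} (hts : t < s) (hc : ∀ r ∈ Icc t s, irrevDeriv W δ s ≤ W' r) :
    irrevDeriv W δ s ≤ irrevDeriv W δ t := by
  refine le_irrevDeriv fun z htz => ?_
  rcases le_or_gt z s with hzs | hsz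
  · exact le_irrevSlope_of_forall_le_deriv hW hδ0 htz fun r hr => hc r ⟨hr.1, hr.2.trans hzs⟩
  · have hfrom_s := (le_irrevSlope_iff hsz).1 (irrevDeriv_le_irrevSlope hW hW'c hWtop hδ0 hsz)
    have hto_s := mul_sub_le_sub_of_forall_le_deriv hW hts.le hc
    rw [le_irrevSlope_iff htz]
    linarith [hδtri t s z hts hsz, hδ0 (t, s)]

theorem irrevDeriv_lt_irrevDeriv_of_lt_le_deriv (hW : ∀ t, HasDerivAt W (W' t) t)
    (hW'c : Continuous W') (hWtop : Tendsto W' atTop atTop) (hδ0 : ∀ p, 0 ≤ δ p)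
    (hδtri : ∀ u₀ v u₁, u₀ < v → v < u₁ → δ (u₀, v) + δ (v, u₁) ≤ δ (u₀, u₁))
    {x y c : ℝ} (hxy : x < y) (hdc : irrevDeriv W δ x < c) (hc : ∀ r ∈ Icc x y, c ≤ W' r) :
    irrevDeriv W δ y < irrevDeriv W δ x := by
  set d := irrevDeriv W δ x
  obtain ⟨R, hR⟩ := eventually_atTop.1
    ((eventually_le_irrevSlope hW hW'c hWtop hδ0 c x).and (eventually_gt_atTop y))
  have hyR : y < R := (hR R le_rfl).2
  have hxR : 0 < R - x := by linarith
  -- An almost minimising `z` for `x`, with an error that the gain `(c - d) (y - x)` absorbs;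
  -- `z` is trapped in `(y, R)` because the slope from `x` is at least `c` outside.
  set ε := (c - d) * (y - x) / (R - x)
  have hε : 0 < ε := div_pos (mul_pos (sub_pos.2 hdc) (sub_pos.2 hxy)) hxR
  have hεc : d + ε ≤ c := by
    have : ε ≤ c - d := (div_le_iff₀ hxR).2 (by nlinarith)
    linarith
  obtain ⟨z, hxz, hz⟩ := exists_irrevSlope_lt (show d < d + ε by linarith)
  have hzR : z < R := lt_of_not_ge fun h => (hR z h).1.not_gt (hz.trans_le hεc)
  have hyz : y < z := lt_of_not_ge fun h =>
    (le_irrevSlope_of_forall_le_deriv hW hδ0 hxz fun r hr => hc r ⟨hr.1, hr.2.trans h⟩).not_gt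
      (hz.trans_le hεc)
  have hεz : ε * (z - x) < (c - d) * (y - x) := calc
    ε * (z - x) < ε * (R - x) := by gcongr
    _ = (c - d) * (y - x) := div_mul_cancel₀ _ hxR.ne'
  have hxy' := mul_sub_le_sub_of_forall_le_deriv hW hxy.le hc
  rw [irrevSlope_lt_iff hxz] at hz
  have hslope : irrevSlope W δ y z < d := by
    rw [irrevSlope_lt_iff hyz]
    linarith [hδtri x y z hxy hyz, hδ0 (x, y)]
  exact (irrevDeriv_le_irrevSlope hW hW'c hWtop hδ0 hyz).trans_lt hslope

theorem eventually_nhdsGT_irrevDeriv_lt (hW : ∀ t, HasDerivAt W (W' t) t)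
    (hW'c : Continuous W') (hWtop : Tendsto W' atTop atTop) (hδ0 : ∀ p, 0 ≤ δ p)
    (hδtri : ∀ u₀ v u₁, u₀ < v → v < u₁ → δ (u₀, v) + δ (v, u₁) ≤ δ (u₀, u₁))
    {x : ℝ} (hx : irrevDeriv W δ x < W' x) :
    ∀ᶠ y in 𝓝[>] x, irrevDeriv W δ y < irrevDeriv W δ x := by
  obtain ⟨c, hdc, hcx⟩ := exists_between hx
  obtain ⟨l, u, ⟨hlx, hxu⟩, hlu⟩ :=
    mem_nhds_iff_exists_Ioo_subset.1 (hW'c.continuousAt.eventually (lt_mem_nhds hcx))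
  filter_upwards [Ioo_mem_nhdsGT hxu] with y ⟨hxy, hyu⟩
  exact irrevDeriv_lt_irrevDeriv_of_lt_le_deriv hW hW'c hWtop hδ0 hδtri hxy hdc
    fun r hr => (hlu ⟨hlx.trans_le hr.1, hr.2.trans_lt hyu⟩).le

theorem eventually_nhdsLT_irrevDeriv_le (hW : ∀ t, HasDerivAt W (W' t) t)
    (hW'c : Continuous W') (hWtop : Tendsto W' atTop atTop) (hδ0 : ∀ p, 0 ≤ δ p)
    (hδtri : ∀ u₀ v u₁, u₀ < v → v < u₁ → δ (u₀, v) + δ (v, u₁) ≤ δ (u₀, u₁))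
    {s : ℝ} (hs : irrevDeriv W δ s < W' s) :
    ∀ᶠ t in 𝓝[<] s, irrevDeriv W δ s ≤ irrevDeriv W δ t := by
  obtain ⟨l, u, ⟨hls, hsu⟩, hlu⟩ :=
    mem_nhds_iff_exists_Ioo_subset.1 (hW'c.continuousAt.eventually (lt_mem_nhds hs))
  filter_upwards [Ioo_mem_nhdsLT hls] with t ⟨hlt, hts⟩
  exact irrevDeriv_le_irrevDeriv_of_le_deriv hW hW'c hWtop hδ0 hδtri hts
    fun r hr => (hlu ⟨hlt.trans_le hr.1, hr.2.trans_lt hsu⟩).le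

end IrreversibleDerivative

theorem stmt8_general (W W' : ℝ → ℝ) (hW : ∀ u, HasDerivAt W (W' u) u) (hW'c : Continuous W')
    (hWtop : Tendsto W' atTop atTop)
    (δ : ℝ × ℝ → ℝ) (hδ0 : ∀ p, 0 ≤ δ p)
    (hδtri : ∀ u₀ v u₁ : ℝ, u₀ < v → v < u₁ → δ (u₀, v) + δ (v, u₁) < δ (u₀, u₁))
    (Wird : ℝ → ℝ)
    (hWird : ∀ u, Wird u = sInf {q : ℝ | ∃ z, u < z ∧ q = (W z - W u + δ (u, z)) / (z - u)})
    (a b : ℝ) (hlt : ∀ v ∈ Ioo a b, Wird v < W' v) :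
    StrictAntiOn Wird (Ioo a b) := by
  obtain rfl : Wird = irrevDeriv W δ := funext hWird
  have hδtri' : ∀ u₀ v u₁, u₀ < v → v < u₁ → δ (u₀, v) + δ (v, u₁) ≤ δ (u₀, u₁) :=
    fun u₀ v u₁ h₀ h₁ => (hδtri u₀ v u₁ h₀ h₁).le
  exact ordConnected_Ioo.strictAntiOn_of_eventually
    (fun x hx => eventually_nhdsGT_irrevDeriv_lt hW hW'c hWtop hδ0 hδtri' (hlt x hx))
    (fun x hx => eventually_nhdsLT_irrevDeriv_le hW hW'c hWtop hδ0 hδtri' (hlt x hx))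

/-- if W'_{ir,δ} < W' on an open interval I, then W'_{ir,δ} is strictly
decreasing on I. -/
theorem stmt8 (W W' : ℝ → ℝ) (hW : ∀ u, HasDerivAt W (W' u) u) (hW'c : Continuous W')
    (hWbot : Tendsto W' atBot atBot) (hWtop : Tendsto W' atTop atTop)
    (δ : ℝ × ℝ → ℝ) (hδc : Continuous δ) (hδ0 : ∀ p, 0 ≤ δ p)
    (hδlim : ∀ u, Tendsto (fun v => δ (u, v) / |v - u|) (nhdsWithin u {u}ᶜ) (nhds 0))
    (hδtri : ∀ u₀ v u₁ : ℝ, u₀ < v → v < u₁ → δ (u₀, v) + δ (v, u₁) < δ (u₀, u₁))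
    (Wird : ℝ → ℝ)
    (hWird : ∀ u, Wird u = sInf {q : ℝ | ∃ z, u < z ∧ q = (W z - W u + δ (u, z)) / (z - u)})
    (a b : ℝ) (hlt : ∀ v ∈ Ioo a b, Wird v < W' v) :
    StrictAntiOn Wird (Ioo a b) :=
  stmt8_general W W' hW hW'c hWtop δ hδ0 hδtri Wird hWird a b hlt
end

section
/- Let E ⊂ ℝ be compact with inf E < sup E, let L(E) be the set of limit points of E, let f : E → ℝ be lower semicontinuous and left-continuous, and let g ∈ C(E) be strictly increasing. Assume: (i) for every connected component I = (I⁻, I⁺) of (inf E, sup E) \ E one has (f(I⁺) − f(I⁻))/(g(I⁺) − g(I⁻)) ≥ 1; (ii) for every t ∈ L(E) which is an accumulation point of L(E) ∩ (−∞, t), limsup_{s↑t, s∈L(E)} (f(t) − f(s))/(g(t) − g(s)) ≥ 1. Then s ↦ f(s) − g(s) is nondecreasing on E; in particular f(sup E) − f(inf E) ≥ g(sup E) − g(inf E). -/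
/-! For `0 ≤ r < 1` put `φ = f - r • g`. Then `φ` is lower semicontinuous and left-continuous on
`E`, does not decrease across a gap of `E`, and every point `t` of the derived set `L` that is a
left limit of `L` is approached from the left by points `s ∈ L` with `φ s ≤ φ t`; this last
property is where `r < 1` is needed, to turn the limsup condition into actual points.

Such a `φ` is monotone on `E`. Given `s₁ < s₂` in `E`, lower semicontinuity makes
`{u ∈ E ∩ [s₁, s₂] | φ u ≤ φ s₂}` closed; let `c` be its least element. If `c > s₁` there is
`s ∈ E ∩ [s₁, c)` with `φ s ≤ φ c`, a contradiction: across a gap if `c` is isolated from the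
left, by the limsup condition if `c` is a left limit of `L`, and otherwise the points of `E` just
left of `c` are isolated, so a supremum argument along consecutive gaps, closed up by left
continuity, gives `φ t ≤ φ c` for such a point `t`. Letting `r → 1` gives the theorem. -/

open Filter Set Topology

/-- In `ℝ` the junk value of `limsup` at a function that is not cobounded is `0`, whence `0 ≤ b`. -/
theorem Real.frequently_lt_of_lt_limsup {α : Type*} {F : Filter α} {u : α → ℝ} {b : ℝ}
    (hb : 0 ≤ b) (h : b < limsup u F) : ∃ᶠ x in F, b < u x := by
  by_cases hu : F.IsCoboundedUnder (· ≤ ·) u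
  · exact Filter.frequently_lt_of_lt_limsup hu h
  · rw [Real.limsup_of_not_isCoboundedUnder hu] at h
    exact absurd hb h.not_ge

theorem LowerSemicontinuousOn.isClosed_inter_preimage_Iic {α γ : Type*} [TopologicalSpace α]
    [LinearOrder γ] {f : α → γ} {s : Set α} (hf : LowerSemicontinuousOn f s) (hs : IsClosed s)
    (c : γ) : IsClosed (s ∩ f ⁻¹' Iic c) := by
  obtain ⟨v, hv, hsv⟩ := lowerSemicontinuousOn_iff_preimage_Iic.1 hf c
  exact hsv ▸ hs.inter hv

section Gaps

variable {α : Type*} [ConditionallyCompleteLinearOrder α] [TopologicalSpace α] [OrderTopology α]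
  {E : Set α}

theorem IsClosed.nhdsWithin_Iio_neBot_or_exists_gap (hE : IsClosed E) {s c : α} (hs : s ∈ E)
    (hsc : s < c) :
    (𝓝[E ∩ Iio c] c).NeBot ∨ ∃ d ∈ E, s ≤ d ∧ d < c ∧ Ioo d c ∩ E = ∅ := by
  set D := E ∩ Ico s c
  have hsD : s ∈ D := ⟨hs, le_rfl, hsc⟩
  have hbdd : BddAbove D := ⟨c, fun u hu => hu.2.2.le⟩
  have hcl : sSup D ∈ closure D := csSup_mem_closure ⟨s, hsD⟩ hbdd
  rcases (csSup_le ⟨s, hsD⟩ fun u hu => hu.2.2.le).eq_or_lt with hdc | hdc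
  · have hDc : D ⊆ E ∩ Iio c := fun u hu => ⟨hu.1, hu.2.2⟩
    exact .inl (mem_closure_iff_nhdsWithin_neBot.1 (hdc ▸ closure_mono hDc hcl))
  · refine .inr ⟨sSup D, hE.closure_subset_iff.2 inter_subset_left hcl, le_csSup hbdd hsD, hdc,
      eq_empty_of_forall_notMem fun u ⟨⟨hdu, huc⟩, huE⟩ => hdu.not_ge (le_csSup hbdd ?_)⟩
    exact ⟨huE, (le_csSup hbdd hsD).trans hdu.le, huc⟩

theorem IsClosed.nhdsWithin_Ioi_neBot_or_exists_gap (hE : IsClosed E) {m c : α} (hc : c ∈ E)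
    (hmc : m < c) :
    (𝓝[E ∩ Ioi m] m).NeBot ∨ ∃ w ∈ E, m < w ∧ w ≤ c ∧ Ioo m w ∩ E = ∅ := by
  set W := E ∩ Ioc m c
  have hcW : c ∈ W := ⟨hc, hmc, le_rfl⟩
  have hbdd : BddBelow W := ⟨m, fun u hu => hu.2.1.le⟩
  have hcl : sInf W ∈ closure W := csInf_mem_closure ⟨c, hcW⟩ hbdd
  rcases (le_csInf ⟨c, hcW⟩ fun u hu => hu.2.1.le).eq_or_lt with hmw | hmw
  · have hWm : W ⊆ E ∩ Ioi m := fun u hu => ⟨hu.1, hu.2.1⟩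
    exact .inl (mem_closure_iff_nhdsWithin_neBot.1 (hmw ▸ closure_mono hWm hcl))
  · refine .inr ⟨sInf W, hE.closure_subset_iff.2 inter_subset_left hcl, hmw, csInf_le hbdd hcW,
      eq_empty_of_forall_notMem fun u ⟨⟨hmu, huw⟩, huE⟩ => huw.not_ge (csInf_le hbdd ?_)⟩
    exact ⟨huE, hmu, huw.le.trans (csInf_le hbdd hcW)⟩

end Gaps

section Monotone

variable {E : Set ℝ} {φ : ℝ → ℝ}

theorem IsClosed.apply_le_of_forall_mem_Ico_not_accPt (hE : IsClosed E)
    (hleft : ∀ t ∈ E, ContinuousWithinAt φ (E ∩ Iio t) t)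
    (hgap : ∀ p ∈ E, ∀ q ∈ E, p < q → Ioo p q ∩ E = ∅ → φ p ≤ φ q)
    {t c : ℝ} (ht : t ∈ E) (hc : c ∈ E) (htc : t ≤ c)
    (hiso : ∀ x ∈ Ico t c, ¬AccPt x (𝓟 E)) : φ t ≤ φ c := by
  set T := E ∩ Icc t c ∩ {u | φ t ≤ φ u}
  have htT : t ∈ T := ⟨⟨ht, le_rfl, htc⟩, le_refl (φ t)⟩
  have hbdd : BddAbove T := ⟨c, fun u hu => hu.1.2.2⟩
  have hmT : sSup T ∈ T := by
    have hcl : sSup T ∈ closure T := csSup_mem_closure ⟨t, htT⟩ hbdd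
    have hmE : sSup T ∈ E ∩ Icc t c :=
      (hE.inter isClosed_Icc).closure_subset_iff.2 inter_subset_left hcl
    refine ⟨hmE, ?_⟩
    by_contra hlt
    have : (𝓝[T] sSup T).NeBot := mem_closure_iff_nhdsWithin_neBot.1 hcl
    have hTm : T ⊆ E ∩ Iio (sSup T) := fun u hu =>
      ⟨hu.1.1, (le_csSup hbdd hu).lt_of_ne fun hum => hlt (hum ▸ hu.2)⟩
    exact hlt (ge_of_tendsto ((hleft _ hmE.1).mono_left (nhdsWithin_mono _ hTm))
      (eventually_mem_nhdsWithin.mono fun u hu => hu.2))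
  rcases hmT.1.2.2.eq_or_lt with hmc | hmc
  · exact hmc ▸ hmT.2
  rcases hE.nhdsWithin_Ioi_neBot_or_exists_gap hc hmc with hacc | ⟨w, hw, hmw, hwc, hmw_gap⟩
  · exact absurd (accPt_principal_iff_nhdsWithin.2 (hacc.mono (nhdsWithin_mono _
      fun u hu => ⟨hu.1, hu.2.ne'⟩))) (hiso _ ⟨hmT.1.2.1, hmc⟩)
  · have hwT : w ∈ T := ⟨⟨hw, hmT.1.2.1.trans hmw.le, hwc⟩,
      hmT.2.trans (hgap _ hmT.1.1 w hw hmw hmw_gap)⟩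
    exact absurd (le_csSup hbdd hwT) hmw.not_ge

theorem IsClosed.exists_mem_Ico_apply_le (hE : IsClosed E)
    (hleft : ∀ t ∈ E, ContinuousWithinAt φ (E ∩ Iio t) t)
    (hgap : ∀ p ∈ E, ∀ q ∈ E, p < q → Ioo p q ∩ E = ∅ → φ p ≤ φ q)
    (hacc : ∀ t ∈ derivedSet E, (𝓝[derivedSet E ∩ Iio t] t).NeBot →
      ∃ᶠ s in 𝓝[derivedSet E ∩ Iio t] t, φ s ≤ φ t)
    {s₁ c : ℝ} (hs₁ : s₁ ∈ E) (hc : c ∈ E) (hs₁c : s₁ < c) :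
    ∃ s ∈ E ∩ Ico s₁ c, φ s ≤ φ c := by
  rcases hE.nhdsWithin_Iio_neBot_or_exists_gap hs₁ hs₁c with hEc | ⟨d, hd, hs₁d, hdc, hdc_gap⟩
  swap
  · exact ⟨d, ⟨hd, hs₁d, hdc⟩, hgap d hd c hc hdc hdc_gap⟩
  have hcL : c ∈ derivedSet E :=
    accPt_principal_iff_nhdsWithin.2 (hEc.mono (nhdsWithin_mono _ fun u hu => ⟨hu.1, hu.2.ne⟩))
  by_cases hLc : (𝓝[derivedSet E ∩ Iio c] c).NeBot
  · have hnear : ∀ᶠ s in 𝓝[derivedSet E ∩ Iio c] c, s ∈ derivedSet E ∩ Iio c ∧ s₁ < s :=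
      eventually_mem_nhdsWithin.and ((eventually_gt_nhds hs₁c).filter_mono nhdsWithin_le_nhds)
    obtain ⟨s, hs, ⟨hsL, hsc⟩, hs₁s⟩ := ((hacc c hcL hLc).and_eventually hnear).exists
    exact ⟨s, ⟨(isClosed_iff_derivedSet_subset E).1 hE hsL, hs₁s.le, hsc⟩, hs⟩
  have hnoL : ∀ᶠ x in 𝓝[<] c, x ∉ derivedSet E := by
    rw [not_neBot, ← empty_mem_iff_bot, mem_nhdsWithin_iff_eventually] at hLc
    exact eventually_nhdsWithin_iff.2 (hLc.mono fun x hx hxc hxL => hx ⟨hxL, hxc⟩)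
  obtain ⟨l, hlc, hl⟩ := mem_nhdsLT_iff_exists_Ioo_subset.1 hnoL
  have hnear : ∀ᶠ t in 𝓝[E ∩ Iio c] c, t ∈ E ∩ Iio c ∧ max l s₁ < t :=
    eventually_mem_nhdsWithin.and
      ((eventually_gt_nhds (max_lt hlc hs₁c)).filter_mono nhdsWithin_le_nhds)
  obtain ⟨t, ⟨ht, htc⟩, hlt⟩ := hnear.exists
  refine ⟨t, ⟨ht, (le_max_right _ _).trans hlt.le, htc⟩, ?_⟩
  exact hE.apply_le_of_forall_mem_Ico_not_accPt hleft hgap ht hc htc.le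
    fun x hx => hl ⟨(le_max_left _ _).trans_lt (hlt.trans_le hx.1), hx.2⟩

theorem IsClosed.monotoneOn_of_gap_le_of_frequently_le (hE : IsClosed E)
    (hlsc : LowerSemicontinuousOn φ E)
    (hleft : ∀ t ∈ E, ContinuousWithinAt φ (E ∩ Iio t) t)
    (hgap : ∀ p ∈ E, ∀ q ∈ E, p < q → Ioo p q ∩ E = ∅ → φ p ≤ φ q)
    (hacc : ∀ t ∈ derivedSet E, (𝓝[derivedSet E ∩ Iio t] t).NeBot →
      ∃ᶠ s in 𝓝[derivedSet E ∩ Iio t] t, φ s ≤ φ t) :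
    MonotoneOn φ E := by
  intro s₁ hs₁ s₂ hs₂ h₁₂
  set T := E ∩ φ ⁻¹' Iic (φ s₂) ∩ Icc s₁ s₂
  have hbdd : BddBelow T := ⟨s₁, fun u hu => hu.2.1⟩
  have hcT : sInf T ∈ T :=
    ((hlsc.isClosed_inter_preimage_Iic hE _).inter isClosed_Icc).csInf_mem
      ⟨s₂, ⟨hs₂, le_refl (φ s₂)⟩, h₁₂, le_rfl⟩ hbdd
  rcases hcT.2.1.eq_or_lt with hc | hc
  · exact hc ▸ hcT.1.2
  obtain ⟨s, ⟨hs, hs₁s, hsc⟩, hφs⟩ :=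
    hE.exists_mem_Ico_apply_le hleft hgap hacc hs₁ hcT.1.1 hc
  have hsT : s ∈ T := ⟨⟨hs, hφs.trans hcT.1.2⟩, hs₁s, hsc.le.trans hcT.2.2⟩
  exact absurd (csInf_le hbdd hsT) hsc.not_ge

end Monotone

theorem IsClosed.monotoneOn_sub_mul {E : Set ℝ} {f g : ℝ → ℝ} (hE : IsClosed E)
    (hf : LowerSemicontinuousOn f E) (hfl : ∀ t ∈ E, ContinuousWithinAt f (E ∩ Iio t) t)
    (hgc : ContinuousOn g E) (hgm : StrictMonoOn g E)
    (hi : ∀ p ∈ E, ∀ q ∈ E, p < q → Ioo p q ∩ E = ∅ → g q - g p ≤ f q - f p)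
    (hii : ∀ t ∈ derivedSet E, (𝓝[derivedSet E ∩ Iio t] t).NeBot →
      1 ≤ limsup (fun s => (f t - f s) / (g t - g s)) (𝓝[derivedSet E ∩ Iio t] t))
    {r : ℝ} (hr : r ∈ Ico 0 1) : MonotoneOn (fun s => f s - r * g s) E := by
  have hLE : derivedSet E ⊆ E := (isClosed_iff_derivedSet_subset E).1 hE
  refine hE.monotoneOn_of_gap_le_of_frequently_le ?_ ?_ ?_ ?_
  · simpa only [sub_eq_add_neg, Pi.smul_apply, smul_eq_mul, neg_mul] using
      hf.add (hgc.const_smul (-r)).lowerSemicontinuousOn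
  · exact fun t ht => (hfl t ht).sub (((hgc t ht).mono inter_subset_left).const_smul r)
  · intro p hp q hq hpq hpq_gap
    have := hi p hp q hq hpq hpq_gap
    have := hgm hp hq hpq
    nlinarith [hr.1, hr.2]
  · intro t ht hne
    refine ((Real.frequently_lt_of_lt_limsup hr.1 (hr.2.trans_le (hii t ht hne))).and_eventually
      eventually_mem_nhdsWithin).mono fun s ⟨hq, hsL, hst⟩ => ?_
    rw [lt_div_iff₀ (sub_pos.2 (hgm (hLE hsL) (hLE ht) hst))] at hq
    linarith

theorem monotoneOn_sub_of_monotoneOn_sub_mul {E : Set ℝ} {f g : ℝ → ℝ}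
    (h : ∀ r ∈ Ico (0 : ℝ) 1, MonotoneOn (fun s => f s - r * g s) E) :
    MonotoneOn (fun s => f s - g s) E := by
  intro a ha b hb hab
  have hlim (s : ℝ) : Tendsto (fun r : ℝ => f s - r * g s) (𝓝[<] 1) (𝓝 (f s - g s)) := by
    have : Continuous fun r : ℝ => f s - r * g s := by fun_prop
    exact (this.tendsto' 1 _ (by simp)).mono_left nhdsWithin_le_nhds
  exact le_of_tendsto_of_tendsto (hlim a) (hlim b)
    (eventually_of_mem (Ico_mem_nhdsLT zero_lt_one) fun r hr => h r hr ha hb hab)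

theorem stmt9_general (E : Set ℝ) (hEc : IsCompact E) (hEne : E.Nonempty)
    (L : Set ℝ) (hL : L = {x : ℝ | AccPt x (Filter.principal E)})
    (f g : ℝ → ℝ)
    (hf : LowerSemicontinuousOn f E)
    (hfl : ∀ t ∈ E, Tendsto f (nhdsWithin t (E ∩ Iio t)) (nhds (f t)))
    (hgc : ContinuousOn g E) (hgm : StrictMonoOn g E)
    (hi : ∀ p ∈ E, ∀ q ∈ E, p < q → Ioo p q ∩ E = ∅ → g q - g p ≤ f q - f p)
    (hii : ∀ t ∈ L, (nhdsWithin t (L ∩ Iio t)).NeBot →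
      1 ≤ Filter.limsup (fun s => (f t - f s) / (g t - g s)) (nhdsWithin t (L ∩ Iio t))) :
    (∀ s₁ ∈ E, ∀ s₂ ∈ E, s₁ ≤ s₂ → f s₁ - g s₁ ≤ f s₂ - g s₂) ∧
    g (sSup E) - g (sInf E) ≤ f (sSup E) - f (sInf E) := by
  subst hL
  have hmono : MonotoneOn (fun s => f s - g s) E :=
    monotoneOn_sub_of_monotoneOn_sub_mul fun r hr =>
      hEc.isClosed.monotoneOn_sub_mul hf hfl hgc hgm hi hii hr
  refine ⟨fun s₁ hs₁ s₂ hs₂ h => hmono hs₁ hs₂ h, ?_⟩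
  have := hmono (hEc.sInf_mem hEne) (hEc.sSup_mem hEne)
    (csInf_le_csSup hEne hEc.bddBelow hEc.bddAbove)
  linarith

/-- elementary lemma on compact sets E ⊂ ℝ: if f is lsc and
left-continuous on E, g continuous and strictly increasing on E, the difference
quotient of f over g is ≥ 1 across every hole of E and (in the limsup sense)
at every left accumulation point of the limit points of E, then f − g is
nondecreasing on E. -/
theorem stmt9 (E : Set ℝ) (hEc : IsCompact E) (hEne : E.Nonempty) (hE : sInf E < sSup E)
    (L : Set ℝ) (hL : L = {x : ℝ | AccPt x (Filter.principal E)})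
    (f g : ℝ → ℝ)
    (hf : LowerSemicontinuousOn f E)
    (hfl : ∀ t ∈ E, Tendsto f (nhdsWithin t (E ∩ Iio t)) (nhds (f t)))
    (hgc : ContinuousOn g E) (hgm : StrictMonoOn g E)
    (hi : ∀ p ∈ E, ∀ q ∈ E, p < q → Ioo p q ∩ E = ∅ → g q - g p ≤ f q - f p)
    (hii : ∀ t ∈ L, (nhdsWithin t (L ∩ Iio t)).NeBot →
      1 ≤ Filter.limsup (fun s => (f t - f s) / (g t - g s)) (nhdsWithin t (L ∩ Iio t))) :
    (∀ s₁ ∈ E, ∀ s₂ ∈ E, s₁ ≤ s₂ → f s₁ - g s₁ ≤ f s₂ - g s₂) ∧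
    g (sSup E) - g (sInf E) ≤ f (sSup E) - f (sInf E) :=
  stmt9_general E hEc hEne L hL f g hf hfl hgc hgm hi hii
end

section
/- Let (ℰ, Ψ, δ) be a one-dimensional rate-independent system with ℰ(t,u) = W(u) − ℓ(t)u, Ψ(v) = α₊v⁺ + α₋v⁻, and D(u,v) = Ψ(v−u) + δ(u,v). Then a point u ∈ ℝ satisfies the global stability condition ℰ(t,u) ≤ ℰ(t,v) + D(u,v) for all v ∈ ℝ if and only if W'_{sl,δ}(u) − α₋ ≤ ℓ(t) ≤ W'_{ir,δ}(u) + α₊. -/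
open Filter Set

/-! For `v ≠ u`, dividing the stability inequality by `v - u` turns it into a bound on the
difference quotient `(W v - W u + δ (u, v)) / (v - u)`: an upper bound `l + αm` when `v < u`
(the sign flips), a lower bound `l - αp` when `v > u`. At `v = u` it reduces to `0 ≤ δ (u, u)`.
Quantifying over all `v` and passing to the supremum, resp. infimum, gives the two slope bounds. -/

namespace EReal

theorem biSup_coe_le_coe_iff {ι : Type*} {s : Set ι} {f : ι → ℝ} {c : ℝ} :
    (⨆ i ∈ s, (f i : EReal)) ≤ c ↔ ∀ i ∈ s, f i ≤ c := by
  simp only [iSup₂_le_iff, EReal.coe_le_coe_iff]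

theorem coe_le_biInf_coe_iff {ι : Type*} {s : Set ι} {f : ι → ℝ} {c : ℝ} :
    (c : EReal) ≤ ⨅ i ∈ s, (f i : EReal) ↔ ∀ i ∈ s, c ≤ f i := by
  simp only [le_iInf₂_iff, EReal.coe_le_coe_iff]

end EReal

section StabilityInequality

variable (W : ℝ → ℝ) (δ : ℝ × ℝ → ℝ) {αp αm l u v : ℝ}

theorem stability_ineq_iff_of_lt (hv : v < u) :
    W u - l * u ≤ W v - l * v + (αp * max (v - u) 0 + αm * max (u - v) 0) + δ (u, v) ↔
      (W v - W u + δ (u, v)) / (v - u) ≤ l + αm := by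
  have hvu : v - u < 0 := sub_neg.mpr hv
  rw [max_eq_right hvu.le, max_eq_left (sub_nonneg.mpr hv.le), div_le_iff_of_neg hvu]
  constructor <;> intro h <;> linarith

theorem stability_ineq_iff_of_gt (hv : u < v) :
    W u - l * u ≤ W v - l * v + (αp * max (v - u) 0 + αm * max (u - v) 0) + δ (u, v) ↔
      l - αp ≤ (W v - W u + δ (u, v)) / (v - u) := by
  have hvu : 0 < v - u := sub_pos.mpr hv
  rw [max_eq_left hvu.le, max_eq_right (sub_nonpos.mpr hv.le), le_div_iff₀ hvu]
  constructor <;> intro h <;> linarith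

theorem stability_ineq_self (hδ : 0 ≤ δ (u, u)) :
    W u - l * u ≤ W u - l * u + (αp * max (u - u) 0 + αm * max (u - u) 0) + δ (u, u) := by
  simpa only [sub_self, max_self, mul_zero, add_zero] using le_add_of_nonneg_right hδ

end StabilityInequality

theorem stmt10_general (W : ℝ → ℝ)
    (αp αm : ℝ)
    (δ : ℝ × ℝ → ℝ) (hδ0 : ∀ p, 0 ≤ δ p)
    (l u : ℝ) :
    (∀ v : ℝ, W u - l * u ≤ W v - l * v
        + (αp * max (v - u) 0 + αm * max (u - v) 0) + δ (u, v)) ↔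
    ((⨆ z ∈ Iio u, (((W z - W u + δ (u, z)) / (z - u) : ℝ) : EReal)) ≤ ((l + αm : ℝ) : EReal) ∧
     ((l - αp : ℝ) : EReal) ≤ ⨅ z ∈ Ioi u, (((W z - W u + δ (u, z)) / (z - u) : ℝ) : EReal)) := by
  rw [EReal.biSup_coe_le_coe_iff, EReal.coe_le_biInf_coe_iff]
  constructor
  · intro h
    exact ⟨fun z hz => (stability_ineq_iff_of_lt W δ hz).1 (h z),
      fun z hz => (stability_ineq_iff_of_gt W δ hz).1 (h z)⟩
  · rintro ⟨hlt, hgt⟩ v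
    rcases lt_trichotomy v u with hv | rfl | hv
    · exact (stability_ineq_iff_of_lt W δ hv).2 (hlt v hv)
    · exact stability_ineq_self W δ (hδ0 _)
    · exact (stability_ineq_iff_of_gt W δ hv).2 (hgt v hv)

/-- one-dimensional characterization of D-stability:
ℰ(t,u) ≤ ℰ(t,v) + D(u,v) for all v  ⟺  W'_{sl,δ}(u) − α₋ ≤ ℓ(t) ≤ W'_{ir,δ}(u) + α₊. -/
theorem stmt10 (W W' : ℝ → ℝ) (hW : ∀ u, HasDerivAt W (W' u) u)
    (αp αm : ℝ) (hαp : 0 < αp) (hαm : 0 < αm)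
    (δ : ℝ × ℝ → ℝ) (hδc : Continuous δ) (hδ0 : ∀ p, 0 ≤ δ p)
    (hδlim : ∀ u, Tendsto (fun v => δ (u, v) / |v - u|) (nhdsWithin u {u}ᶜ) (nhds 0))
    (l u : ℝ) :
    (∀ v : ℝ, W u - l * u ≤ W v - l * v
        + (αp * max (v - u) 0 + αm * max (u - v) 0) + δ (u, v)) ↔
    ((⨆ z ∈ Iio u, (((W z - W u + δ (u, z)) / (z - u) : ℝ) : EReal)) ≤ ((l + αm : ℝ) : EReal) ∧
     ((l - αp : ℝ) : EReal) ≤ ⨅ z ∈ Ioi u, (((W z - W u + δ (u, z)) / (z - u) : ℝ) : EReal)) :=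
  stmt10_general W αp αm δ hδ0 l u
end

section
/- Let ℰ(t,u) = W(u) − ℓ(t)u with W ∈ C¹(ℝ) coercive (W'(x) → ±∞ as x → ±∞), D(u,v) = Ψ(v−u) + δ(u,v) with Ψ(v) = α₊v⁺ + α₋v⁻ and δ admissible satisfying the strict reverse triangle inequality δ(u₀,u₁) > δ(u₀,v) + δ(v,u₁) for u₀ < v < u₁. If z ∈ M(t,u) := argmin_{v∈ℝ}{ℰ(t,v) + D(u,v)} and u < v < z, then W'_{ir,δ}(v) ≤ (W(z) − W(v) + δ(v,z))/(z−v) < ℓ(t) − α₊. -/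
open Filter Set

lemma dissipation_eq_mul_sub_of_le {αp αm u w : ℝ} (h : u ≤ w) :
    αp * max (w - u) 0 + αm * max (u - w) 0 = αp * (w - u) := by
  rw [max_eq_left (sub_nonneg.mpr h), max_eq_right (sub_nonpos.mpr h), mul_zero, add_zero]

theorem stmt11_general (W : ℝ → ℝ)
    (αp αm : ℝ)
    (δ : ℝ × ℝ → ℝ)
    (hδtri : ∀ u₀ v u₁ : ℝ, u₀ < v → v < u₁ → δ (u₀, v) + δ (v, u₁) < δ (u₀, u₁))
    (l u z : ℝ)
    (hz : ∀ w : ℝ, W z - l * z + (αp * max (z - u) 0 + αm * max (u - z) 0) + δ (u, z)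
        ≤ W w - l * w + (αp * max (w - u) 0 + αm * max (u - w) 0) + δ (u, w)) :
    ∀ v : ℝ, u < v → v < z →
      (⨅ w ∈ Ioi v, (((W w - W v + δ (v, w)) / (w - v) : ℝ) : EReal))
          ≤ (((W z - W v + δ (v, z)) / (z - v) : ℝ) : EReal) ∧
      (W z - W v + δ (v, z)) / (z - v) < l - αp := by
  intro v huv hvz
  refine ⟨iInf₂_le z (mem_Ioi.mpr hvz), ?_⟩
  rw [div_lt_iff₀ (sub_pos.mpr hvz)]
  -- Both z and v lie right of u, so comparing z with the competitor v only sees αp (z - v).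
  have hmin := hz v
  rw [dissipation_eq_mul_sub_of_le (huv.trans hvz).le, dissipation_eq_mul_sub_of_le huv.le] at hmin
  linarith [hδtri u v z huv hvz]

/-- if z minimizes v ↦ ℰ(t,v) + D(u,v) and u < v < z, then
W'_{ir,δ}(v) ≤ (W(z) − W(v) + δ(v,z))/(z−v) < ℓ(t) − α₊. -/
theorem stmt11 (W W' : ℝ → ℝ) (hW : ∀ u, HasDerivAt W (W' u) u)
    (hWbot : Tendsto W' atBot atBot) (hWtop : Tendsto W' atTop atTop)
    (αp αm : ℝ) (hαp : 0 < αp) (hαm : 0 < αm)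
    (δ : ℝ × ℝ → ℝ) (hδc : Continuous δ) (hδ0 : ∀ p, 0 ≤ δ p)
    (hδlim : ∀ u, Tendsto (fun v => δ (u, v) / |v - u|) (nhdsWithin u {u}ᶜ) (nhds 0))
    (hδtri : ∀ u₀ v u₁ : ℝ, u₀ < v → v < u₁ → δ (u₀, v) + δ (v, u₁) < δ (u₀, u₁))
    (l u z : ℝ)
    (hz : ∀ w : ℝ, W z - l * z + (αp * max (z - u) 0 + αm * max (u - z) 0) + δ (u, z)
        ≤ W w - l * w + (αp * max (w - u) 0 + αm * max (u - w) 0) + δ (u, w)) :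
    ∀ v : ℝ, u < v → v < z →
      (⨅ w ∈ Ioi v, (((W w - W v + δ (v, w)) / (w - v) : ℝ) : EReal))
          ≤ (((W z - W v + δ (v, z)) / (z - v) : ℝ) : EReal) ∧
      (W z - W v + δ (v, z)) / (z - v) < l - αp :=
  stmt11_general W αp αm δ hδtri l u z hz
end

section
/- Suppose u ∈ ℝ is D-stable at time t, i.e. ℰ(t,u) ≤ ℰ(t,v) + Ψ(v−u) + δ(u,v) for all v, where ℰ(t,u) = W(u) − ℓ(t)u and Ψ(v) = α₊v⁺ + α₋v⁻. If z ∈ argmin_v{ℰ(t,v) + Ψ(v−u) + δ(u,v)} with z > u, then W'_{ir,δ}(u) = (W(z) − W(u) + δ(u,z))/(z−u) = ℓ(t) − α₊. -/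
open Filter Set Topology

/- Stability tested at `v > u` bounds every forward slope `(W w - W u + δ(u,w))/(w - u)` from
below by `ℓ - α₊`; minimality of `z` tested at `v = u`, where `δ(u,u) = 0`, bounds the slope at
`z` from above by the same number. Hence `z` attains the infimum defining `W'_{ir,δ}(u)`. -/

theorem eq_zero_of_tendsto_div_abs_sub {f : ℝ → ℝ} {u : ℝ} (hf : ContinuousAt f u)
    (h : Tendsto (fun v => f v / |v - u|) (𝓝[≠] u) (𝓝 0)) : f u = 0 := by
  have habs : Tendsto (fun v => |v - u|) (𝓝[≠] u) (𝓝 0) := by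
    exact (Continuous.tendsto' (by fun_prop) u 0 (by simp)).mono_left nhdsWithin_le_nhds
  have hprod : Tendsto (fun v => f v / |v - u| * |v - u|) (𝓝[≠] u) (𝓝 0) := by
    simpa using h.mul habs
  have hf0 : Tendsto f (𝓝[≠] u) (𝓝 0) := by
    refine hprod.congr' ?_
    filter_upwards [self_mem_nhdsWithin] with v hv
    exact div_mul_cancel₀ _ (abs_ne_zero.mpr (sub_ne_zero.mpr hv))
  exact tendsto_nhds_unique (hf.tendsto.mono_left nhdsWithin_le_nhds) hf0

section Slope

variable {W δ : ℝ → ℝ} {αp αm l u w : ℝ}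

theorem sub_le_slope_of_le_add_dissipation (huw : u < w)
    (h : W u - l * u ≤ W w - l * w + (αp * max (w - u) 0 + αm * max (u - w) 0) + δ w) :
    l - αp ≤ (W w - W u + δ w) / (w - u) := by
  rw [max_eq_left (by linarith), max_eq_right (by linarith)] at h
  rw [le_div_iff₀ (by linarith)]
  linarith

theorem slope_le_sub_of_add_dissipation_le (huw : u < w) (hδ : δ u = 0)
    (h : W w - l * w + (αp * max (w - u) 0 + αm * max (u - w) 0) + δ w
      ≤ W u - l * u + (αp * max (u - u) 0 + αm * max (u - u) 0) + δ u) :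
    (W w - W u + δ w) / (w - u) ≤ l - αp := by
  rw [max_eq_left (by linarith), max_eq_right (by linarith), hδ] at h
  rw [div_le_iff₀ (by linarith)]
  simp only [sub_self, max_self, mul_zero, add_zero] at h
  linarith

end Slope

theorem biInf_coe_eq_of_forall_le {s : Set ℝ} {q : ℝ → ℝ} {z : ℝ} (hz : z ∈ s)
    (h : ∀ w ∈ s, q z ≤ q w) : ⨅ w ∈ s, (q w : EReal) = q z :=
  le_antisymm (iInf₂_le z hz) (le_iInf₂ fun w hw => EReal.coe_le_coe_iff.mpr (h w hw))

theorem stmt13_general (W : ℝ → ℝ)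
    (αp αm : ℝ)
    (δ : ℝ × ℝ → ℝ) (hδc : Continuous δ)
    (hδlim : ∀ u, Tendsto (fun v => δ (u, v) / |v - u|) (nhdsWithin u {u}ᶜ) (nhds 0))
    (l u z : ℝ)
    (hstable : ∀ v : ℝ, W u - l * u ≤ W v - l * v
        + (αp * max (v - u) 0 + αm * max (u - v) 0) + δ (u, v))
    (hz : ∀ w : ℝ, W z - l * z + (αp * max (z - u) 0 + αm * max (u - z) 0) + δ (u, z)
        ≤ W w - l * w + (αp * max (w - u) 0 + αm * max (u - w) 0) + δ (u, w))
    (hzu : u < z) :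
    (⨅ w ∈ Ioi u, (((W w - W u + δ (u, w)) / (w - u) : ℝ) : EReal))
        = (((W z - W u + δ (u, z)) / (z - u) : ℝ) : EReal) ∧
    (W z - W u + δ (u, z)) / (z - u) = l - αp := by
  have hδuu : δ (u, u) = 0 :=
    eq_zero_of_tendsto_div_abs_sub (f := fun v => δ (u, v)) (by fun_prop) (hδlim u)
  have hlower : ∀ w ∈ Ioi u, l - αp ≤ (W w - W u + δ (u, w)) / (w - u) := fun w hw =>
    sub_le_slope_of_le_add_dissipation (δ := fun v => δ (u, v)) hw (hstable w)
  have hslope : (W z - W u + δ (u, z)) / (z - u) = l - αp :=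
    le_antisymm
      (slope_le_sub_of_add_dissipation_le (δ := fun v => δ (u, v)) hzu hδuu (hz u))
      (hlower z hzu)
  exact ⟨biInf_coe_eq_of_forall_le hzu fun w hw => hslope ▸ hlower w hw, hslope⟩

/-- if u is D-stable at time t and z > u minimizes
v ↦ ℰ(t,v) + D(u,v), then W'_{ir,δ}(u) = (W(z) − W(u) + δ(u,z))/(z−u) = ℓ(t) − α₊. -/
theorem stmt13 (W W' : ℝ → ℝ) (hW : ∀ u, HasDerivAt W (W' u) u)
    (hWbot : Tendsto W' atBot atBot) (hWtop : Tendsto W' atTop atTop)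
    (αp αm : ℝ) (hαp : 0 < αp) (hαm : 0 < αm)
    (δ : ℝ × ℝ → ℝ) (hδc : Continuous δ) (hδ0 : ∀ p, 0 ≤ δ p)
    (hδlim : ∀ u, Tendsto (fun v => δ (u, v) / |v - u|) (nhdsWithin u {u}ᶜ) (nhds 0))
    (hδtri : ∀ u₀ v u₁ : ℝ, u₀ < v → v < u₁ → δ (u₀, v) + δ (v, u₁) < δ (u₀, u₁))
    (l u z : ℝ)
    (hstable : ∀ v : ℝ, W u - l * u ≤ W v - l * v
        + (αp * max (v - u) 0 + αm * max (u - v) 0) + δ (u, v))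
    (hz : ∀ w : ℝ, W z - l * z + (αp * max (z - u) 0 + αm * max (u - z) 0) + δ (u, z)
        ≤ W w - l * w + (αp * max (w - u) 0 + αm * max (u - w) 0) + δ (u, w))
    (hzu : u < z) :
    (⨅ w ∈ Ioi u, (((W w - W u + δ (u, w)) / (w - u) : ℝ) : EReal))
        = (((W z - W u + δ (u, z)) / (z - u) : ℝ) : EReal) ∧
    (W z - W u + δ (u, z)) / (z - u) = l - αp :=
  stmt13_general W αp αm δ hδc hδlim l u z hstable hz hzu
end

section
/- Let z ∈ M(t,u) := argmin_v{W(v) − ℓ(t)v + α₊(v−u)⁺ + α₋(v−u)⁻ + δ(u,v)} with z > u, where δ satisfies the strict reverse triangle inequality δ(u₀,u₁) > δ(u₀,v) + δ(v,u₁) for u₀ < v < u₁. Then every v ∈ (u, z) fails the global stability condition: there exists w ∈ ℝ with W(v) − ℓ(t)v > W(w) − ℓ(t)w + α₊(w−v)⁺ + α₋(w−v)⁻ + δ(v,w). -/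
/-!
Since `Ψ` is additive along monotone paths, the strict reverse triangle inequality of `δ` makes
the detour `u → v → z` strictly more dissipative than the direct jump `u → z`. Comparing the
minimality of `z` with the competitor `v` then shows that jumping from `v` to `z` strictly lowers
energy plus dissipation below the energy at `v`.
-/

open Filter Set

/-- `Ψ(w - v) + δ(v, w)`. -/
def dissipation (αp αm : ℝ) (δ : ℝ × ℝ → ℝ) (v w : ℝ) : ℝ :=
  αp * max (w - v) 0 + αm * max (v - w) 0 + δ (v, w)

theorem dissipation_add_lt {αp αm : ℝ} {δ : ℝ × ℝ → ℝ} {u v w : ℝ} (huv : u < v) (hvw : v < w)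
    (hδ : δ (u, v) + δ (v, w) < δ (u, w)) :
    dissipation αp αm δ u v + dissipation αp αm δ v w < dissipation αp αm δ u w := by
  simp only [dissipation, max_eq_left (sub_nonneg.2 huv.le), max_eq_left (sub_nonneg.2 hvw.le),
    max_eq_left (sub_nonneg.2 (huv.trans hvw).le), max_eq_right (sub_nonpos.2 huv.le),
    max_eq_right (sub_nonpos.2 hvw.le), max_eq_right (sub_nonpos.2 (huv.trans hvw).le)]
  linarith

theorem add_lt_of_add_le_of_triangle_lt {X : Type*} (E : X → ℝ) (D : X → X → ℝ)
    {u v z : X} (hz : E z + D u z ≤ E v + D u v) (hD : D u v + D v z < D u z) :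
    E z + D v z < E v := by
  linarith

theorem stmt14_general (W : ℝ → ℝ)
    (αp αm : ℝ)
    (δ : ℝ × ℝ → ℝ)
    (hδtri : ∀ u₀ v u₁ : ℝ, u₀ < v → v < u₁ → δ (u₀, v) + δ (v, u₁) < δ (u₀, u₁))
    (l u z : ℝ)
    (hz : ∀ w : ℝ, W z - l * z + (αp * max (z - u) 0 + αm * max (u - z) 0) + δ (u, z)
        ≤ W w - l * w + (αp * max (w - u) 0 + αm * max (u - w) 0) + δ (u, w)) :
    ∀ v : ℝ, u < v → v < z →
      ∃ w : ℝ, W w - l * w + (αp * max (w - v) 0 + αm * max (v - w) 0) + δ (v, w)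
        < W v - l * v := by
  intro v huv hvz
  refine ⟨z, ?_⟩
  have hmin : W z - l * z + dissipation αp αm δ u z ≤ W v - l * v + dissipation αp αm δ u v := by
    simpa only [dissipation, add_assoc] using hz v
  simpa only [dissipation, add_assoc] using
    add_lt_of_add_le_of_triangle_lt (fun w => W w - l * w) (dissipation αp αm δ)
      hmin (dissipation_add_lt huv hvz (hδtri u v z huv hvz))

/-- if z > u minimizes v ↦ W(v) − ℓ(t)v + Ψ(v−u) + δ(u,v), then every
v ∈ (u,z) fails the global stability condition. -/
theorem stmt14 (W W' : ℝ → ℝ) (hW : ∀ u, HasDerivAt W (W' u) u)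
    (hWbot : Tendsto W' atBot atBot) (hWtop : Tendsto W' atTop atTop)
    (αp αm : ℝ) (hαp : 0 < αp) (hαm : 0 < αm)
    (δ : ℝ × ℝ → ℝ) (hδc : Continuous δ) (hδ0 : ∀ p, 0 ≤ δ p)
    (hδlim : ∀ u, Tendsto (fun v => δ (u, v) / |v - u|) (nhdsWithin u {u}ᶜ) (nhds 0))
    (hδtri : ∀ u₀ v u₁ : ℝ, u₀ < v → v < u₁ → δ (u₀, v) + δ (v, u₁) < δ (u₀, u₁))
    (l u z : ℝ) (hzu : u < z)
    (hz : ∀ w : ℝ, W z - l * z + (αp * max (z - u) 0 + αm * max (u - z) 0) + δ (u, z)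
        ≤ W w - l * w + (αp * max (w - u) 0 + αm * max (u - w) 0) + δ (u, w)) :
    ∀ v : ℝ, u < v → v < z →
      ∃ w : ℝ, W w - l * w + (αp * max (w - v) 0 + αm * max (v - w) 0) + δ (v, w)
        < W v - l * v :=
  stmt14_general W αp αm δ hδtri l u z hz
end
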